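/- Let N ≥ 3, α > 0, 0 < μ < 2. For each mass M > 0 there is a unique ω > α²/N² such that M(ω) = M, where M(ω) = N (μ+1)^{1/μ}/μ · ω^{1/μ-1/2} · ∫_{α/(N√ω)}^1 (1-t²)^{1/μ-1} dt. -/

import Mathlib

open Real

/-- The mass of the symmetric stationary state of frequency `ω` on the `N`-star graph with
attractive delta of strength `α` at the vertex. -/
noncomputable def massFn (N : ℕ) (α μ : ℝ) (ω : ℝ) : ℝ :=
  N * (μ + 1) ^ (1 / μ) / μ * ω ^ (1 / μ - 1 / 2) *
    ∫ t in (α / (N * Real.sqrt ω))..1, (1 - t ^ 2) ^ (1 / μ - 1)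

/-!
With `c = α / N`, the mass is a positive multiple of `ω ^ p * T (c / √ω)`, where
`p = 1/μ - 1/2 > 0` because `μ < 2`, and `T x = ∫ t in x..1, (1 - t²) ^ q` with `q = 1/μ - 1 > -1`.
Since `q > -1` the integrand is integrable on `[0, 1]`, so `T` is continuous and strictly
decreasing there, with `T 1 = 0`. Hence on `[c², ∞)` the mass is continuous and strictly
increasing, vanishes at `ω = c²`, and grows like `ω ^ p`: the intermediate value theorem gives
existence, strict monotonicity uniqueness.
-/

open Set Filter MeasureTheory

noncomputable def tailIntegral (q x : ℝ) : ℝ := ∫ t in x..1, (1 - t ^ 2) ^ q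

section tailIntegral

variable {q : ℝ}

lemma intervalIntegrable_one_sub_sq_rpow (hq : -1 < q) {x y : ℝ}
    (hx : x ∈ Icc (0 : ℝ) 1) (hy : y ∈ Icc (0 : ℝ) 1) :
    IntervalIntegrable (fun t => (1 - t ^ 2) ^ q) volume x y := by
  have h_one_sub : IntervalIntegrable (fun t : ℝ => (1 - t) ^ q) volume 0 1 := by
    simpa using (intervalIntegral.intervalIntegrable_rpow' (a := 1) (b := 0) hq).comp_sub_left 1
  have h_one_add : ContinuousOn (fun t : ℝ => (1 + t) ^ q) (uIcc 0 1) :=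
    (continuousOn_const.add continuousOn_id).rpow_const fun t ht => by
      rw [uIcc_of_le zero_le_one] at ht
      exact Or.inl (by simp only [Pi.add_apply, id]; linarith [ht.1])
  have h_factor : EqOn (fun t : ℝ => (1 - t) ^ q * (1 + t) ^ q) (fun t => (1 - t ^ 2) ^ q)
      (uIoc 0 1) := fun t ht => by
    rw [uIoc_of_le zero_le_one] at ht
    have h_sub : (0 : ℝ) ≤ 1 - t := by linarith [ht.2]
    have h_add : (0 : ℝ) ≤ 1 + t := by linarith [ht.1]
    simp only [← mul_rpow h_sub h_add]
    ring_nf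
  have h01 : IntervalIntegrable (fun t => (1 - t ^ 2) ^ q) volume 0 1 :=
    (intervalIntegrable_congr h_factor).mp (h_one_sub.mul_continuousOn h_one_add)
  refine h01.mono_set (uIcc_subset_uIcc ?_ ?_) <;> rwa [uIcc_of_le zero_le_one]

lemma tailIntegral_one : tailIntegral q 1 = 0 := intervalIntegral.integral_same

lemma tailIntegral_strictAntiOn (hq : -1 < q) : StrictAntiOn (tailIntegral q) (Icc 0 1) := by
  intro x hx y hy hxy
  have h_split : tailIntegral q x = (∫ t in x..y, (1 - t ^ 2) ^ q) + tailIntegral q y :=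
    (intervalIntegral.integral_add_adjacent_intervals
      (intervalIntegrable_one_sub_sq_rpow hq hx hy)
      (intervalIntegrable_one_sub_sq_rpow hq hy ⟨zero_le_one, le_rfl⟩)).symm
  have h_pos : 0 < ∫ t in x..y, (1 - t ^ 2) ^ q :=
    intervalIntegral.intervalIntegral_pos_of_pos_on (intervalIntegrable_one_sub_sq_rpow hq hx hy)
      (fun t ht => rpow_pos_of_pos (by nlinarith [hx.1, hy.2, ht.1, ht.2]) q) hxy
  linarith

lemma tailIntegral_nonneg (hq : -1 < q) {x : ℝ} (hx : x ∈ Icc (0 : ℝ) 1) :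
    0 ≤ tailIntegral q x :=
  tailIntegral_one (q := q) ▸
    (tailIntegral_strictAntiOn hq).antitoneOn hx ⟨zero_le_one, le_rfl⟩ hx.2

lemma tailIntegral_continuousOn (hq : -1 < q) : ContinuousOn (tailIntegral q) (Icc 0 1) := by
  have h : IntegrableOn (fun t => (1 - t ^ 2) ^ q) (uIcc (0 : ℝ) 1) := by
    rw [← intervalIntegrable_iff']
    exact intervalIntegrable_one_sub_sq_rpow hq ⟨le_rfl, zero_le_one⟩ ⟨zero_le_one, le_rfl⟩
  rw [← uIcc_of_le zero_le_one]
  exact intervalIntegral.continuousOn_primitive_interval_left h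

end tailIntegral

lemma existsUnique_gt_eq_of_strictMonoOn {f : ℝ → ℝ} {a M : ℝ} (hmono : StrictMonoOn f (Ici a))
    (hcont : ContinuousOn f (Ici a)) (htop : Tendsto f atTop atTop) (hM : f a < M) :
    ∃! ω, a < ω ∧ f ω = M := by
  obtain ⟨b, hMb, hab⟩ := ((htop.eventually_gt_atTop M).and (eventually_ge_atTop a)).exists
  obtain ⟨ω, hω, hfω⟩ := intermediate_value_Ioo hab (hcont.mono Icc_subset_Ici_self) ⟨hM, hMb⟩
  refine ⟨ω, ⟨hω.1, hfω⟩, fun ω' hω' => ?_⟩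
  exact hmono.injOn (mem_Ici.2 hω'.1.le) (mem_Ici.2 hω.1.le) (hω'.2.trans hfω.symm)

section massProfile

variable {p q c : ℝ}

lemma div_sqrt_mem_Icc (hc : 0 < c) {ω : ℝ} (hω : c ^ 2 ≤ ω) : c / √ω ∈ Icc 0 1 := by
  have hω0 : 0 < √ω := sqrt_pos.2 ((pow_pos hc 2).trans_le hω)
  exact ⟨by positivity, (div_le_one hω0).2 ((le_sqrt' hc).2 hω)⟩

lemma div_sqrt_strictAntiOn (hc : 0 < c) : StrictAntiOn (fun ω => c / √ω) (Ioi 0) :=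
  fun _ hx _ _ hxy => div_lt_div_of_pos_left hc (sqrt_pos.2 hx) (sqrt_lt_sqrt (le_of_lt hx) hxy)

noncomputable def massProfile (p q c ω : ℝ) : ℝ := ω ^ p * tailIntegral q (c / √ω)

lemma massProfile_sq (hc : 0 < c) : massProfile p q c (c ^ 2) = 0 := by
  rw [massProfile, sqrt_sq hc.le, div_self hc.ne', tailIntegral_one, mul_zero]

lemma massProfile_strictMonoOn (hp : 0 ≤ p) (hq : -1 < q) (hc : 0 < c) :
    StrictMonoOn (massProfile p q c) (Ici (c ^ 2)) := by
  intro x hx y hy hxy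
  have hx0 : 0 < x := (pow_pos hc 2).trans_le hx
  exact mul_lt_mul' (rpow_le_rpow hx0.le hxy.le hp)
    (tailIntegral_strictAntiOn hq (div_sqrt_mem_Icc hc hy) (div_sqrt_mem_Icc hc hx)
      (div_sqrt_strictAntiOn hc hx0 (hx0.trans hxy) hxy))
    (tailIntegral_nonneg hq (div_sqrt_mem_Icc hc hx)) (rpow_pos_of_pos (hx0.trans hxy) p)

lemma massProfile_continuousOn (hq : -1 < q) (hc : 0 < c) :
    ContinuousOn (massProfile p q c) (Ici (c ^ 2)) := by
  have hpos : ∀ ω ∈ Ici (c ^ 2), 0 < ω := fun ω hω => (pow_pos hc 2).trans_le hω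
  refine ContinuousOn.mul (fun ω hω => (continuousAt_rpow_const ω p
    (Or.inl (hpos ω hω).ne')).continuousWithinAt) ?_
  exact (tailIntegral_continuousOn hq).comp
    (continuousOn_const.div continuous_sqrt.continuousOn fun ω hω => (sqrt_pos.2 (hpos ω hω)).ne')
    fun ω hω => div_sqrt_mem_Icc hc hω

lemma tendsto_massProfile_atTop (hp : 0 < p) (hq : -1 < q) (hc : 0 < c) :
    Tendsto (massProfile p q c) atTop atTop := by
  have h_half : 0 < tailIntegral q (1 / 2) :=
    tailIntegral_one (q := q) ▸ tailIntegral_strictAntiOn hq ⟨by norm_num, by norm_num⟩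
      ⟨zero_le_one, le_rfl⟩ (by norm_num)
  refine tendsto_atTop_mono' _ ?_ ((tendsto_rpow_atTop hp).atTop_mul_const h_half)
  filter_upwards [eventually_ge_atTop ((2 * c) ^ 2)] with ω hω
  have hcω : c ^ 2 ≤ ω := by nlinarith
  have h_le_half : c / √ω ≤ 1 / 2 := by
    rw [div_le_iff₀ (sqrt_pos.2 ((pow_pos hc 2).trans_le hcω))]
    linarith [(le_sqrt' (by positivity : (0:ℝ) < 2 * c)).2 hω]
  exact mul_le_mul_of_nonneg_left ((tailIntegral_strictAntiOn hq).antitoneOn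
    (div_sqrt_mem_Icc hc hcω) ⟨by norm_num, by norm_num⟩ h_le_half)
    (rpow_nonneg ((pow_pos hc 2).le.trans hcω) p)

end massProfile

lemma massFn_eq_mul_massProfile (N : ℕ) (α μ : ℝ) :
    massFn N α μ = fun ω => N * (μ + 1) ^ (1 / μ) / μ *
      massProfile (1 / μ - 1 / 2) (1 / μ - 1) (α / N) ω := by
  ext ω
  rw [massFn, massProfile, tailIntegral, div_div, mul_assoc]

theorem massFn_bijective (N : ℕ) (hN : 3 ≤ N) (α μ : ℝ)
    (hα : 0 < α) (hμ : 0 < μ) (hμ2 : μ < 2) :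
    ∀ M : ℝ, 0 < M → ∃! ω : ℝ, α ^ 2 / N ^ 2 < ω ∧ massFn N α μ ω = M := by
  intro M hM
  have hN0 : (0 : ℝ) < N := Nat.cast_pos.2 (by omega)
  have hK : 0 < N * (μ + 1) ^ (1 / μ) / μ := by positivity
  have h_half_lt : 1 / 2 < 1 / μ := one_div_lt_one_div_of_lt hμ hμ2
  have hp : 0 < 1 / μ - 1 / 2 := by linarith
  have hq : -1 < 1 / μ - 1 := by linarith
  have hc : 0 < α / N := by positivity
  rw [massFn_eq_mul_massProfile, ← div_pow]
  refine existsUnique_gt_eq_of_strictMonoOn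
    (fun x hx y hy hxy =>
      mul_lt_mul_of_pos_left (massProfile_strictMonoOn hp.le hq hc hx hy hxy) hK)
    ((massProfile_continuousOn hq hc).const_mul _)
    ((tendsto_massProfile_atTop hp hq hc).const_mul_atTop hK) ?_
  simpa only [massProfile_sq hc, mul_zero] using hM
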